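/- Let ε > 0 and let (f, g) be a pair of ε-potentials. Then f is convex on Ω₀ and continuously differentiable on Ω₀, with derivative f'(x) = (∫_{S_x} y dμ₁(y))/μ₁(S_x) for every x ∈ Ω₀; moreover f'(x) belongs to the interior of the interval S_x for every x ∈ Ω₀. -/

import Mathlib

open MeasureTheory Set
open scoped Classical ENNReal

noncomputable section

/-- `μ` is a probability measure supported on `[a,b]` with continuous density `u`
bounded below by `lam` and above by `Lam` on `[a,b]`. -/
def IsGoodMarginal (μ : Measure ℝ) (u : ℝ → ℝ) (a b lam Lam : ℝ) : Prop :=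
  IsProbabilityMeasure μ ∧
  μ = (volume.restrict (Icc a b)).withDensity (fun x => ENNReal.ofReal (u x)) ∧
  ContinuousOn u (Icc a b) ∧
  ∀ x ∈ Icc a b, lam ≤ u x ∧ u x ≤ Lam

/-- `(f,g)` is a pair of `ε`-potentials for the quadratically regularized OT problem. -/
def IsPotentialPair (μ₀ μ₁ : Measure ℝ) (a₀ b₀ a₁ b₁ ε : ℝ) (f g : ℝ → ℝ) : Prop :=
  (∃ K, LipschitzOnWith K f (Icc a₀ b₀)) ∧
  (∃ K, LipschitzOnWith K g (Icc a₁ b₁)) ∧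
  (∀ x ∈ Icc a₀ b₀, ∫ y in Icc a₁ b₁, max (x * y - f x - g y) 0 ∂μ₁ = ε) ∧
  (∀ y ∈ Icc a₁ b₁, ∫ x in Icc a₀ b₀, max (x * y - f x - g y) 0 ∂μ₀ = ε)

/-- the `x`-section `S_x` of the support of the optimal coupling. -/
def secX (f g : ℝ → ℝ) (a₁ b₁ x : ℝ) : Set ℝ :=
  {y ∈ Icc a₁ b₁ | 0 ≤ x * y - f x - g y}

/-- the `y`-section `S^y` of the support of the optimal coupling. -/
def secY (f g : ℝ → ℝ) (a₀ b₀ y : ℝ) : Set ℝ :=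
  {x ∈ Icc a₀ b₀ | 0 ≤ x * y - f x - g y}

/-- `T_ε(x) = (∫_{S_x} y dμ₁)/μ₁(S_x)`, the derivative `f'` of the potential `f`. -/
def Tmap (μ₁ : Measure ℝ) (f g : ℝ → ℝ) (a₁ b₁ x : ℝ) : ℝ :=
  (∫ y in secX f g a₁ b₁ x, y ∂μ₁) / (μ₁ (secX f g a₁ b₁ x)).toReal

/-- the symmetric quantity, the derivative `g'` of the potential `g`. -/
def Gmap (μ₀ : Measure ℝ) (f g : ℝ → ℝ) (a₀ b₀ y : ℝ) : ℝ :=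
  (∫ x in secY f g a₀ b₀ y, x ∂μ₀) / (μ₀ (secY f g a₀ b₀ y)).toReal

/-- left endpoint `y_m(x)` of `S_x`. -/
def ymF (f g : ℝ → ℝ) (a₁ b₁ x : ℝ) : ℝ := sInf (secX f g a₁ b₁ x)

/-- right endpoint `y_M(x)` of `S_x`. -/
def yMF (f g : ℝ → ℝ) (a₁ b₁ x : ℝ) : ℝ := sSup (secX f g a₁ b₁ x)

/-- left endpoint `x_m(y)` of `S^y`. -/
def xmF (f g : ℝ → ℝ) (a₀ b₀ y : ℝ) : ℝ := sInf (secY f g a₀ b₀ y)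

/-- right endpoint `x_M(y)` of `S^y`. -/
def xMF (f g : ℝ → ℝ) (a₀ b₀ y : ℝ) : ℝ := sSup (secY f g a₀ b₀ y)

/-- `T₀` is the (nondecreasing) Monge map from `μ₀` to `μ₁`. -/
def IsMongeMap (μ₀ μ₁ : Measure ℝ) (T₀ : ℝ → ℝ) : Prop :=
  Monotone T₀ ∧ Measure.map T₀ μ₀ = μ₁

/-- convex conjugate relative to `[a,b]`. -/
def conjOn (f : ℝ → ℝ) (a b y : ℝ) : ℝ := sSup ((fun x => x * y - f x) '' Icc a b)

/-! Comparing the defining equation at `x` with the one at `x'` on the section `S_x` gives the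
subgradient inequality `(x' - x) T(x) ≤ f x' - f x` for the `μ₁`-mean `T(x)` of `S_x`: indeed
`∫_{S_x} ξ(x', ·) ≤ ∫ ξ(x', ·)₊ = ε = ∫_{S_x} ξ(x, ·)`, and `ξ(x', ·) - ξ(x, ·)` is affine.
Hence `f` is convex, and by symmetry so is `g`. Then `ξ(x, ·)` is concave, so `S_x` is an interval
on whose interior `ξ(x, ·) > 0`; as `μ₁` has no atoms, the indicator of `S_x` depends continuously
on `x` off a `μ₁`-null set, and `T` is continuous by dominated convergence. A function with a
continuous selection of subgradients is differentiable with that derivative. Finally the mean of a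
measure without atoms on an interval of positive mass lies in the interior of the interval. -/

section Subgradient

variable {s : Set ℝ} {F φ : ℝ → ℝ}

lemma convexOn_of_forall_sub_mul_le (hs : Convex ℝ s)
    (h : ∀ x ∈ s, ∀ x' ∈ s, (x' - x) * φ x ≤ F x' - F x) : ConvexOn ℝ s F := by
  refine ⟨hs, fun p hp q hq a b ha hb hab => ?_⟩
  have hz := hs hp hq ha hb hab
  simp only [smul_eq_mul] at hz ⊢
  have hp' := mul_le_mul_of_nonneg_left (h _ hz p hp) ha
  have hq' := mul_le_mul_of_nonneg_left (h _ hz q hq) hb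
  linear_combination hp' + hq' + ((a * p + b * q) * φ (a * p + b * q) - F (a * p + b * q)) * hab

lemma slope_mem_uIcc_of_forall_sub_mul_le
    (h : ∀ x ∈ s, ∀ x' ∈ s, (x' - x) * φ x ≤ F x' - F x) {x x' : ℝ} (hx : x ∈ s) (hx' : x' ∈ s)
    (hne : x ≠ x') : slope F x x' ∈ uIcc (φ x) (φ x') := by
  wlog hlt : x < x' generalizing x x'
  · rw [slope_comm, uIcc_comm]
    exact this hx' hx hne.symm (hne.lt_or_gt.resolve_left hlt)
  have hpos : 0 < x' - x := sub_pos.mpr hlt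
  have hlo : φ x ≤ slope F x x' := by
    rw [slope_def_field, le_div_iff₀ hpos]; linarith [h x hx x' hx']
  have hhi : slope F x x' ≤ φ x' := by
    rw [slope_def_field, div_le_iff₀ hpos]; linarith [h x' hx' x hx]
  exact Icc_subset_uIcc ⟨hlo, hhi⟩

lemma hasDerivWithinAt_of_forall_sub_mul_le
    (h : ∀ x ∈ s, ∀ x' ∈ s, (x' - x) * φ x ≤ F x' - F x) {x₀ : ℝ} (hx₀ : x₀ ∈ s)
    (hφ : ContinuousWithinAt φ s x₀) : HasDerivWithinAt F (φ x₀) s x₀ := by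
  rw [hasDerivWithinAt_iff_tendsto_slope]
  have hφ' : Filter.Tendsto φ (nhdsWithin x₀ (s \ {x₀})) (nhds (φ x₀)) :=
    hφ.tendsto.mono_left (nhdsWithin_mono x₀ sdiff_subset)
  have hslope : ∀ x ∈ s \ {x₀}, slope F x₀ x ∈ uIcc (φ x₀) (φ x) := fun x hx =>
    slope_mem_uIcc_of_forall_sub_mul_le h hx₀ hx.1 (Ne.symm hx.2)
  have hmin := (tendsto_const_nhds (x := φ x₀)).min hφ'
  have hmax := (tendsto_const_nhds (x := φ x₀)).max hφ'
  rw [min_self] at hmin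
  rw [max_self] at hmax
  refine tendsto_of_tendsto_of_tendsto_of_le_of_le' hmin hmax ?_ ?_
  · filter_upwards [self_mem_nhdsWithin] with x hx using (hslope x hx).1
  · filter_upwards [self_mem_nhdsWithin] with x hx using (hslope x hx).2

end Subgradient

lemma ConvexOn.concaveOn_mul_sub_sub {s : Set ℝ} {g : ℝ → ℝ} (hg : ConvexOn ℝ s g) (x c : ℝ) :
    ConcaveOn ℝ s (fun y => x * y - c - g y) :=
  (((LinearMap.mulLeft ℝ x).concaveOn hg.1).sub (convexOn_const c hg.1)).sub hg

lemma setAverage_id_mem_interior {μ : Measure ℝ} [IsFiniteMeasure μ] [NullSingletonClass μ]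
    {S : Set ℝ} (hS : Convex ℝ S) (hSc : IsCompact S) (h0 : μ S ≠ 0) :
    ⨍ y in S, y ∂μ ∈ interior S := by
  refine ((strictConvex_iff_convex.mpr hS).ae_eq_const_or_average_mem_interior hSc.isClosed
    (ae_restrict_mem hSc.measurableSet) (continuousOn_id.integrableOn_compact hSc)).resolve_left
    fun hconst => h0 ?_
  rw [← Measure.restrict_apply_univ]
  exact measure_mono_null (union_compl_self {⨍ y in S, y ∂μ}).ge
    (measure_union_null (measure_singleton _) (ae_iff.mp hconst))

section

open Filter Topology

variable {μ : Measure ℝ} {f g : ℝ → ℝ} {a b ε x y : ℝ}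

lemma secX_subset_Icc : secX f g a b x ⊆ Icc a b := fun _ hy => hy.1

lemma isCompact_secX (hg : ContinuousOn g (Icc a b)) : IsCompact (secX f g a b x) :=
  isCompact_Icc.of_isClosed_subset
    ((by fun_prop : ContinuousOn (fun y => x * y - f x - g y) (Icc a b))
      |>.preimage_isClosed_of_isClosed isClosed_Icc isClosed_Ici)
    secX_subset_Icc

lemma measurableSet_secX (hg : ContinuousOn g (Icc a b)) : MeasurableSet (secX f g a b x) :=
  (isCompact_secX hg).isClosed.measurableSet

lemma convex_secX (hg : ConvexOn ℝ (Icc a b) g) : Convex ℝ (secX f g a b x) :=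
  (hg.concaveOn_mul_sub_sub x (f x)).convex_ge 0

lemma Tmap_eq_setAverage : Tmap μ f g a b x = ⨍ y in secX f g a b x, y ∂μ := by
  rw [setAverage_eq, smul_eq_mul, measureReal_def, Tmap, div_eq_inv_mul]

lemma exists_pos_of_integral_max_eq (hε : 0 < ε)
    (hx : ∫ y in Icc a b, max (x * y - f x - g y) 0 ∂μ = ε) :
    ∃ y ∈ Icc a b, 0 < x * y - f x - g y := by
  by_contra! h
  rw [setIntegral_eq_zero_of_forall_eq_zero fun y hy => max_eq_right (h y hy)] at hx
  exact hε.ne hx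

lemma setIntegral_secX_eq (hg : ContinuousOn g (Icc a b))
    (hx : ∫ y in Icc a b, max (x * y - f x - g y) 0 ∂μ = ε) :
    ∫ y in secX f g a b x, (x * y - f x - g y) ∂μ = ε := by
  rw [← hx, setIntegral_eq_of_subset_of_forall_sdiff_eq_zero measurableSet_Icc secX_subset_Icc
    fun y hy => max_eq_right (not_le.mp fun h => hy.2 ⟨hy.1, h⟩).le]
  exact setIntegral_congr_fun (measurableSet_secX hg) fun y hy => (max_eq_left hy.2).symm

lemma measure_secX_ne_zero (hε : 0 < ε) (hg : ContinuousOn g (Icc a b))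
    (hx : ∫ y in Icc a b, max (x * y - f x - g y) 0 ∂μ = ε) : μ (secX f g a b x) ≠ 0 := by
  intro h0
  have := setIntegral_secX_eq hg hx
  rw [setIntegral_measure_zero _ h0] at this
  exact hε.ne this

lemma sub_mul_Tmap_le [IsFiniteMeasure μ] (hε : 0 < ε) (hg : ContinuousOn g (Icc a b)) {x' : ℝ}
    (hx : ∫ y in Icc a b, max (x * y - f x - g y) 0 ∂μ = ε)
    (hx' : ∫ y in Icc a b, max (x' * y - f x' - g y) 0 ∂μ = ε) :
    (x' - x) * Tmap μ f g a b x ≤ f x' - f x := by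
  set S := secX f g a b x
  have hm : 0 < μ.real S :=
    ENNReal.toReal_pos (measure_secX_ne_zero hε hg hx) (measure_ne_top _ _)
  have hint : ∀ {φ : ℝ → ℝ}, ContinuousOn φ (Icc a b) → IntegrableOn φ S μ := fun hφ =>
    (hφ.mono secX_subset_Icc).integrableOn_compact (isCompact_secX hg)
  have hξ' : ContinuousOn (fun y => x' * y - f x' - g y) (Icc a b) := by fun_prop
  have hsplit : ∫ y in S, (x' * y - f x' - g y) ∂μ
      = ε + ((x' - x) * ∫ y in S, y ∂μ - μ.real S * (f x' - f x)) := by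
    have hy : IntegrableOn (fun y => y) S μ := hint continuousOn_id
    have hc : IntegrableOn (fun _ => f x' - f x) S μ := integrableOn_const (measure_ne_top _ _)
    calc ∫ y in S, (x' * y - f x' - g y) ∂μ
        = ∫ y in S, ((x * y - f x - g y) + ((x' - x) * y - (f x' - f x))) ∂μ :=
          setIntegral_congr_fun (measurableSet_secX hg) fun y _ => by ring
      _ = _ := by
        rw [integral_add (hint (by fun_prop))
            (hint (φ := fun y => (x' - x) * y - (f x' - f x)) (by fun_prop)),
          setIntegral_secX_eq hg hx, integral_sub (hy.const_mul _) hc, integral_const_mul,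
          setIntegral_const, smul_eq_mul]
  have hle : ∫ y in S, (x' * y - f x' - g y) ∂μ ≤ ε :=
    calc ∫ y in S, (x' * y - f x' - g y) ∂μ
        ≤ ∫ y in S, max (x' * y - f x' - g y) 0 ∂μ :=
          setIntegral_mono (hint hξ') (hint (hξ'.sup continuousOn_const)) fun y => le_max_left _ _
      _ ≤ ε := hx' ▸ setIntegral_mono_set
          ((hξ'.sup continuousOn_const).integrableOn_compact isCompact_Icc)
          (.of_forall fun y => le_max_right _ _) secX_subset_Icc.eventuallyLE
  rw [Tmap, ← measureReal_def, mul_div_assoc', div_le_iff₀ hm]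
  linarith

lemma eq_ymF_or_eq_yMF (hg : ContinuousOn g (Icc a b)) (hgc : ConvexOn ℝ (Icc a b) g)
    (hpos : ∃ y₁ ∈ Icc a b, 0 < x * y₁ - f x - g y₁) (hy : y ∈ Icc a b)
    (hy0 : x * y - f x - g y = 0) : y = ymF f g a b x ∨ y = yMF f g a b x := by
  have hξ := hgc.concaveOn_mul_sub_sub x (f x)
  obtain ⟨y₁, hy₁, hy₁pos⟩ := hpos
  have hS := isCompact_secX (f := f) (x := x) hg
  have hyS : y ∈ secX f g a b x := ⟨hy, hy0.ge⟩
  have hm : ymF f g a b x ∈ secX f g a b x := hS.sInf_mem ⟨y, hyS⟩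
  have hM : yMF f g a b x ∈ secX f g a b x := hS.sSup_mem ⟨y, hyS⟩
  by_contra! hne
  have hmy : ymF f g a b x < y := (csInf_le hS.bddBelow hyS).lt_of_ne hne.1.symm
  have hyM : y < yMF f g a b x := (le_csSup hS.bddAbove hyS).lt_of_ne hne.2
  -- `y` lies strictly between `y₁`, where `ξ > 0`, and an endpoint, where `ξ ≥ 0`
  rcases (show y₁ ≠ y by rintro rfl; linarith).lt_or_gt with h | h
  · have := hξ.lt_right_of_left_lt hy₁ hM.1 (Ioo_subset_openSegment ⟨h, hyM⟩) (hy0 ▸ hy₁pos)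
    linarith [hM.2]
  · have := hξ.left_lt_of_lt_right hm.1 hy₁ (Ioo_subset_openSegment ⟨hmy, h⟩) (hy0 ▸ hy₁pos)
    linarith [hm.2]

lemma eventually_mem_secX_iff {s : Set ℝ} {x₀ : ℝ} (hf : ContinuousWithinAt f s x₀)
    (hy : y ∈ Icc a b → x₀ * y - f x₀ - g y ≠ 0) :
    ∀ᶠ x in 𝓝[s] x₀, y ∈ secX f g a b x ↔ y ∈ secX f g a b x₀ := by
  by_cases hyI : y ∈ Icc a b
  · have hξ : ContinuousWithinAt (fun x => x * y - f x - g y) s x₀ := by fun_prop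
    rcases (hy hyI).lt_or_gt with hneg | hpos
    · filter_upwards [hξ.eventually (eventually_lt_nhds hneg)] with x hx
      exact iff_of_false (fun h => hx.not_ge h.2) (fun h => hneg.not_ge h.2)
    · filter_upwards [hξ.eventually (eventually_gt_nhds hpos)] with x hx
      exact ⟨fun _ => ⟨hyI, hpos.le⟩, fun _ => ⟨hyI, hx.le⟩⟩
  · exact .of_forall fun x => iff_of_false (fun h => hyI h.1) (fun h => hyI h.1)

lemma continuousWithinAt_setIntegral_secX [IsFiniteMeasure μ] [NullSingletonClass μ]
    {s : Set ℝ} {x₀ : ℝ} (hf : ContinuousWithinAt f s x₀) (hg : ContinuousOn g (Icc a b))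
    (hgc : ConvexOn ℝ (Icc a b) g) (hpos : ∃ y₁ ∈ Icc a b, 0 < x₀ * y₁ - f x₀ - g y₁)
    {φ : ℝ → ℝ} (hφ : Continuous φ) :
    ContinuousWithinAt (fun x => ∫ y in secX f g a b x, φ y ∂μ) s x₀ := by
  simp only [← integral_indicator (measurableSet_secX hg)]
  refine continuousWithinAt_of_dominated (bound := (Icc a b).indicator fun y => ‖φ y‖)
    (.of_forall fun x => (hφ.aestronglyMeasurable.indicator (measurableSet_secX hg)))
    (.of_forall fun x => .of_forall fun y => ?_) ?_ ?_
  · rw [norm_indicator_eq_indicator_norm]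
    exact indicator_le_indicator_of_subset secX_subset_Icc (fun _ => norm_nonneg _) y
  · exact (integrable_indicator_iff measurableSet_Icc).mpr
      (hφ.norm.continuousOn.integrableOn_compact isCompact_Icc)
  · have hnull : μ {ymF f g a b x₀, yMF f g a b x₀} = 0 := (toFinite _).measure_zero μ
    filter_upwards [measure_eq_zero_iff_ae_notMem.mp hnull] with y hy
    refine tendsto_const_nhds.congr' ?_
    filter_upwards [eventually_mem_secX_iff hf fun hyI hy0 =>
      hy (eq_ymF_or_eq_yMF hg hgc hpos hyI hy0)] with x hx
    simp only [indicator, hx]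

end

section Potential

variable {μ₀ μ₁ : Measure ℝ} {a₀ b₀ a₁ b₁ ε : ℝ} {f g : ℝ → ℝ}

lemma IsPotentialPair.swap (hfg : IsPotentialPair μ₀ μ₁ a₀ b₀ a₁ b₁ ε f g) :
    IsPotentialPair μ₁ μ₀ a₁ b₁ a₀ b₀ ε g f := by
  obtain ⟨hf, hg, hx, hy⟩ := hfg
  refine ⟨hg, hf, fun y hy' => ?_, fun x hx' => ?_⟩
  · simpa only [mul_comm y, sub_right_comm] using hy y hy'
  · simpa only [mul_comm x, sub_right_comm] using hx x hx'

lemma IsPotentialPair.continuousOn_left (hfg : IsPotentialPair μ₀ μ₁ a₀ b₀ a₁ b₁ ε f g) :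
    ContinuousOn f (Icc a₀ b₀) :=
  hfg.1.choose_spec.continuousOn

lemma IsPotentialPair.sub_mul_Tmap_le [IsFiniteMeasure μ₁] (hε : 0 < ε)
    (hfg : IsPotentialPair μ₀ μ₁ a₀ b₀ a₁ b₁ ε f g) :
    ∀ x ∈ Icc a₀ b₀, ∀ x' ∈ Icc a₀ b₀, (x' - x) * Tmap μ₁ f g a₁ b₁ x ≤ f x' - f x :=
  fun x hx x' hx' =>
    _root_.sub_mul_Tmap_le hε hfg.swap.continuousOn_left (hfg.2.2.1 x hx) (hfg.2.2.1 x' hx')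

lemma IsPotentialPair.convexOn_left [IsFiniteMeasure μ₁] (hε : 0 < ε)
    (hfg : IsPotentialPair μ₀ μ₁ a₀ b₀ a₁ b₁ ε f g) : ConvexOn ℝ (Icc a₀ b₀) f :=
  convexOn_of_forall_sub_mul_le (convex_Icc _ _) (hfg.sub_mul_Tmap_le hε)

lemma IsPotentialPair.continuousOn_Tmap [IsFiniteMeasure μ₀] [IsFiniteMeasure μ₁]
    [NullSingletonClass μ₁] (hε : 0 < ε) (hfg : IsPotentialPair μ₀ μ₁ a₀ b₀ a₁ b₁ ε f g) :
    ContinuousOn (Tmap μ₁ f g a₁ b₁) (Icc a₀ b₀) := by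
  intro x hx
  have hg := hfg.swap.continuousOn_left
  have hint {φ : ℝ → ℝ} (hφ : Continuous φ) := continuousWithinAt_setIntegral_secX (μ := μ₁)
    (hfg.continuousOn_left x hx) hg (hfg.swap.convexOn_left hε)
    (exists_pos_of_integral_max_eq hε (hfg.2.2.1 x hx)) hφ
  have hT : Tmap μ₁ f g a₁ b₁
      = fun x => (∫ y in secX f g a₁ b₁ x, y ∂μ₁) / ∫ _ in secX f g a₁ b₁ x, (1 : ℝ) ∂μ₁ := by
    funext x
    simp [Tmap, measureReal_def]
  rw [hT]
  refine (hint continuous_id).div (hint continuous_const) ?_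
  simpa [measureReal_def] using ENNReal.toReal_ne_zero.mpr
    ⟨measure_secX_ne_zero hε hg (hfg.2.2.1 x hx), measure_ne_top _ _⟩

lemma IsPotentialPair.Tmap_mem_interior [IsFiniteMeasure μ₀] [IsFiniteMeasure μ₁]
    [NullSingletonClass μ₁] (hε : 0 < ε) (hfg : IsPotentialPair μ₀ μ₁ a₀ b₀ a₁ b₁ ε f g)
    {x : ℝ} (hx : x ∈ Icc a₀ b₀) : Tmap μ₁ f g a₁ b₁ x ∈ interior (secX f g a₁ b₁ x) := by
  have hg := hfg.swap.continuousOn_left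
  rw [Tmap_eq_setAverage]
  exact setAverage_id_mem_interior (convex_secX (hfg.swap.convexOn_left hε)) (isCompact_secX hg)
    (measure_secX_ne_zero hε hg (hfg.2.2.1 x hx))

end Potential

theorem stmt1_general
    (a₀ b₀ a₁ b₁ lam Lam : ℝ) (μ₀ μ₁ : Measure ℝ) (u₀ u₁ : ℝ → ℝ)
    (hμ₀ : IsGoodMarginal μ₀ u₀ a₀ b₀ lam Lam)
    (hμ₁ : IsGoodMarginal μ₁ u₁ a₁ b₁ lam Lam)
    (ε : ℝ) (hε : 0 < ε) (f g : ℝ → ℝ)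
    (hfg : IsPotentialPair μ₀ μ₁ a₀ b₀ a₁ b₁ ε f g) :
    ConvexOn ℝ (Icc a₀ b₀) f ∧
    ContinuousOn (Tmap μ₁ f g a₁ b₁) (Icc a₀ b₀) ∧
    (∀ x ∈ Icc a₀ b₀, HasDerivWithinAt f (Tmap μ₁ f g a₁ b₁ x) (Icc a₀ b₀) x) ∧
    (∀ x ∈ Icc a₀ b₀,
      Tmap μ₁ f g a₁ b₁ x =
        (∫ y in secX f g a₁ b₁ x, y ∂μ₁) / (μ₁ (secX f g a₁ b₁ x)).toReal ∧
      Tmap μ₁ f g a₁ b₁ x ∈ interior (secX f g a₁ b₁ x)) := by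
  have := hμ₀.1
  have := hμ₁.1
  have : NullSingletonClass μ₁ := hμ₁.2.1 ▸ inferInstance
  have hT := hfg.continuousOn_Tmap hε
  refine ⟨hfg.convexOn_left hε, hT, fun x hx => ?_, fun x hx => ⟨rfl, hfg.Tmap_mem_interior hε hx⟩⟩
  exact hasDerivWithinAt_of_forall_sub_mul_le (hfg.sub_mul_Tmap_le hε) hx (hT x hx)

theorem stmt1
    (a₀ b₀ a₁ b₁ lam Lam : ℝ) (μ₀ μ₁ : Measure ℝ) (u₀ u₁ : ℝ → ℝ)
    (hab₀ : a₀ < b₀) (hab₁ : a₁ < b₁) (hlam : 0 < lam)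
    (hμ₀ : IsGoodMarginal μ₀ u₀ a₀ b₀ lam Lam)
    (hμ₁ : IsGoodMarginal μ₁ u₁ a₁ b₁ lam Lam)
    (ε : ℝ) (hε : 0 < ε) (f g : ℝ → ℝ)
    (hfg : IsPotentialPair μ₀ μ₁ a₀ b₀ a₁ b₁ ε f g) :
    ConvexOn ℝ (Icc a₀ b₀) f ∧
    ContinuousOn (Tmap μ₁ f g a₁ b₁) (Icc a₀ b₀) ∧
    (∀ x ∈ Icc a₀ b₀, HasDerivWithinAt f (Tmap μ₁ f g a₁ b₁ x) (Icc a₀ b₀) x) ∧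
    (∀ x ∈ Icc a₀ b₀,
      Tmap μ₁ f g a₁ b₁ x =
        (∫ y in secX f g a₁ b₁ x, y ∂μ₁) / (μ₁ (secX f g a₁ b₁ x)).toReal ∧
      Tmap μ₁ f g a₁ b₁ x ∈ interior (secX f g a₁ b₁ x)) :=
  stmt1_general a₀ b₀ a₁ b₁ lam Lam μ₀ μ₁ u₀ u₁ hμ₀ hμ₁ ε hε f g hfg
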